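/- arXiv:1610.04691 — 4 statements merged into one kernel-verified Lean document; each statement's English description precedes it below -/
import Mathlib

section
/- A finite simple graph G has no odd antiholes and no independent set of size 3 if and only if its vertex set can be partitioned into two cliques (with arbitrary edges between them). -/
/-!
Two cliques covering `V` are the colour classes of a proper 2-colouring of `Gᶜ`, and odd antiholes
and independent triples of `G` are induced odd cycles and triangles of `Gᶜ`. So it suffices that a
graph is bipartite iff it has neither triangles nor induced odd cycles of length at least 5.
For the nontrivial direction take a shortest odd closed walk: a repeated vertex or a chord would
split it into two closed walks whose lengths add up to an odd number, one of them odd and shorter.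
Hence it is an induced odd cycle, of length at least 5 as there are no loops and no triangles.
-/

namespace SimpleGraph

variable {V : Type*} {G : SimpleGraph V}

lemma cycleGraph_adj_iff_of_lt {n : ℕ} {a b : Fin n} (hab : a < b) :
    (cycleGraph n).Adj a b ↔ b.val = a.val + 1 ∨ (a.val = 0 ∧ b.val + 1 = n) := by
  rw [cycleGraph_adj', Fin.coe_sub_iff_lt.mpr hab, Fin.sub_val_of_le hab.le]
  have : a.val < b.val := hab
  have := b.isLt
  omega

lemma cliqueFree_three_compl_iff :
    Gᶜ.CliqueFree 3 ↔
      ¬∃ a b c : V, a ≠ b ∧ a ≠ c ∧ b ≠ c ∧ ¬G.Adj a b ∧ ¬G.Adj a c ∧ ¬G.Adj b c := by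
  classical
  simp only [CliqueFree, is3Clique_iff, compl_adj, not_exists]
  exact ⟨fun h a b c habc => h {a, b, c} a b c (by tauto),
    fun h _ a b c habc => h a b c (by tauto)⟩

lemma isEmpty_embedding_compl_iff {W : Type*} {H : SimpleGraph W} :
    IsEmpty (Hᶜ ↪g G) ↔ IsEmpty (H ↪g Gᶜ) := by
  rw [Embedding.complEquiv.isEmpty_congr, compl_compl]

lemma colorable_two_iff_exists_isIndepSet :
    G.Colorable 2 ↔ ∃ A : Set V, G.IsIndepSet A ∧ G.IsIndepSet Aᶜ := by
  constructor
  · rintro ⟨c⟩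
    let c' : G.Coloring Bool := recolorOfEquiv G finTwoEquiv c
    refine ⟨c'.colorClass true, c'.isIndepSet_colorClass true, ?_⟩
    convert c'.isIndepSet_colorClass false
    ext v
    simp [Coloring.colorClass]
  · rintro ⟨A, hA, hAc⟩
    classical
    refine (Coloring.mk (fun v => decide (v ∈ A)) fun {u v} huv hc => ?_).colorable
    by_cases hu : u ∈ A
    · exact hA hu (by simpa [hu] using hc) (G.ne_of_adj huv) huv
    · exact hAc hu (by simpa [hu] using hc) (G.ne_of_adj huv) huv

namespace Walk

variable {u v : V}

lemma exists_walks_of_shortcut (p : G.Walk u v) {i j : ℕ} (hij : i ≤ j) (hj : j ≤ p.length)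
    (q : G.Walk (p.getVert i) (p.getVert j)) :
    ∃ (r₁ : G.Walk (p.getVert i) (p.getVert i)) (r₂ : G.Walk u v),
      r₁.length = j - i + q.length ∧ r₂.length = i + q.length + (p.length - j) := by
  have hend : (p.drop i).getVert (j - i) = p.getVert j := by
    rw [drop_getVert, Nat.add_sub_cancel' hij]
  refine ⟨((p.drop i).take (j - i)).append (q.reverse.copy hend.symm rfl),
    ((p.take i).append q).append (p.drop j), ?_, ?_⟩
  · simp only [length_append, take_length, drop_length, length_copy, length_reverse]
    omega
  · simp only [length_append, take_length, drop_length]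
    omega

structure IsShortestOddLoop (p : G.Walk u u) : Prop where
  odd_length : Odd p.length
  length_le : ∀ (v : V) (q : G.Walk v v), Odd q.length → p.length ≤ q.length

lemma exists_isShortestOddLoop (p : G.Walk u u) (hp : Odd p.length) :
    ∃ (v : V) (q : G.Walk v v), q.IsShortestOddLoop := by
  obtain ⟨_, ⟨v, q, hq, rfl⟩, hmin⟩ := wellFounded_lt.has_min
    {m | ∃ (v : V) (q : G.Walk v v), Odd q.length ∧ q.length = m} ⟨_, u, p, hp, rfl⟩
  exact ⟨v, q, hq, fun w r hr => not_lt.mp (hmin _ ⟨w, r, hr, rfl⟩)⟩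

namespace IsShortestOddLoop

variable {p : G.Walk u u}

lemma le_of_shortcut (hp : p.IsShortestOddLoop) {i j : ℕ} (hij : i ≤ j) (hj : j ≤ p.length)
    (q : G.Walk (p.getVert i) (p.getVert j)) :
    p.length ≤ j - i + q.length ∨ j ≤ i + q.length := by
  obtain ⟨r₁, r₂, hr₁, hr₂⟩ := p.exists_walks_of_shortcut hij hj q
  have hodd := Nat.odd_iff.mp hp.odd_length
  by_cases h : Odd r₁.length
  · exact .inl (hr₁ ▸ hp.length_le _ r₁ h)
  · have : Odd r₂.length := by
      rw [Nat.not_odd_iff] at h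
      rw [Nat.odd_iff]
      omega
    have := hp.length_le _ r₂ this
    omega

lemma getVert_ne_of_lt (hp : p.IsShortestOddLoop) {i j : ℕ} (hij : i < j) (hj : j < p.length) :
    p.getVert i ≠ p.getVert j := fun h => by
  have := hp.le_of_shortcut hij.le hj.le (nil.copy rfl h)
  simp only [length_copy, length_nil] at this
  omega

lemma adj_getVert_iff (hp : p.IsShortestOddLoop) {i j : ℕ} (hij : i < j) (hj : j < p.length) :
    G.Adj (p.getVert i) (p.getVert j) ↔ j = i + 1 ∨ (i = 0 ∧ j + 1 = p.length) := by
  refine ⟨fun h => ?_, ?_⟩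
  · have := hp.le_of_shortcut hij.le hj.le h.toWalk
    simp only [length_cons, length_nil] at this
    omega
  · rintro (rfl | ⟨rfl, hj⟩)
    · exact p.adj_getVert_succ (by omega)
    · have := p.adj_getVert_succ (i := j) (by omega)
      rw [hj, getVert_length] at this
      rw [getVert_zero]
      exact this.symm

lemma five_le_length (hp : p.IsShortestOddLoop) (hG : G.CliqueFree 3) : 5 ≤ p.length := by
  obtain ⟨k, hk⟩ := hp.odd_length
  have hne1 : p.length ≠ 1 := fun h => by
    have := p.adj_getVert_succ (i := 0) (by omega)
    rw [zero_add, ← h, getVert_length, getVert_zero] at this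
    exact G.irrefl this
  have hne3 : p.length ≠ 3 := fun h => by
    classical
    have adj {i j : ℕ} (hij : i < j) (hj : j < 3) : G.Adj (p.getVert i) (p.getVert j) :=
      (hp.adj_getVert_iff hij (h ▸ hj)).mpr (by omega)
    exact hG _ (is3Clique_triple_iff.mpr
      ⟨adj zero_lt_one (by norm_num), adj zero_lt_two (by norm_num), adj one_lt_two (by norm_num)⟩)
  omega

def cycleEmbedding (hp : p.IsShortestOddLoop) : cycleGraph p.length ↪g G where
  toFun k := p.getVert k
  inj' a b h := by
    by_contra hne
    rcases Fin.lt_or_lt_of_ne hne with hab | hab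
    · exact hp.getVert_ne_of_lt hab b.isLt h
    · exact hp.getVert_ne_of_lt hab a.isLt h.symm
  map_rel_iff' {a b} := by
    rcases lt_trichotomy a b with hab | rfl | hab
    · rw [cycleGraph_adj_iff_of_lt hab]
      exact hp.adj_getVert_iff hab b.isLt
    · simp
    · rw [adj_comm, (cycleGraph _).adj_comm, cycleGraph_adj_iff_of_lt hab]
      exact hp.adj_getVert_iff hab a.isLt

end IsShortestOddLoop

theorem even_length_of_cliqueFree_of_isEmpty_cycleGraph (h3 : G.CliqueFree 3)
    (hcycle : ∀ n, 5 ≤ n → Odd n → IsEmpty (cycleGraph n ↪g G)) (p : G.Walk u u) :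
    Even p.length := by
  by_contra hp
  obtain ⟨v, q, hq⟩ := p.exists_isShortestOddLoop (Nat.not_even_iff_odd.mp hp)
  exact (hcycle _ (hq.five_le_length h3) hq.odd_length).false hq.cycleEmbedding

end Walk

theorem colorable_two_iff_cliqueFree_three_and_isEmpty_cycleGraph :
    G.Colorable 2 ↔ G.CliqueFree 3 ∧ ∀ n, 5 ≤ n → Odd n → IsEmpty (cycleGraph n ↪g G) := by
  refine ⟨fun h => ⟨h.cliqueFree (by norm_num), fun n hn hodd => ⟨fun f => ?_⟩⟩,
    fun ⟨h3, hcycle⟩ => two_colorable_iff_forall_loop_even.mpr fun _ =>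
      Walk.even_length_of_cliqueFree_of_isEmpty_cycleGraph h3 hcycle⟩
  have := (h.of_hom f.toHom).chromaticNumber_le
  rw [chromaticNumber_cycleGraph_of_odd n (by omega) hodd] at this
  norm_num at this

end SimpleGraph

open SimpleGraph

theorem no_odd_antiholes_no_indep_triple_iff_two_cliques_general {V : Type*}
    (G : SimpleGraph V) :
    ((∀ n : ℕ, 5 ≤ n → Odd n → IsEmpty ((SimpleGraph.cycleGraph n)ᶜ ↪g G)) ∧
      ¬∃ a b c : V, a ≠ b ∧ a ≠ c ∧ b ≠ c ∧ ¬G.Adj a b ∧ ¬G.Adj a c ∧ ¬G.Adj b c) ↔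
    ∃ A : Set V, G.IsClique A ∧ G.IsClique Aᶜ := by
  simp only [isEmpty_embedding_compl_iff, ← cliqueFree_three_compl_iff, ← isIndepSet_compl,
    ← colorable_two_iff_exists_isIndepSet, colorable_two_iff_cliqueFree_three_and_isEmpty_cycleGraph]
  exact and_comm

/-- A finite simple graph has no odd antiholes and no independent set of size 3 iff
its vertex set partitions into two cliques. -/
theorem no_odd_antiholes_no_indep_triple_iff_two_cliques {V : Type*} [Fintype V]
    (G : SimpleGraph V) :
    ((∀ n : ℕ, 5 ≤ n → Odd n → IsEmpty ((SimpleGraph.cycleGraph n)ᶜ ↪g G)) ∧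
      ¬∃ a b c : V, a ≠ b ∧ a ≠ c ∧ b ≠ c ∧ ¬G.Adj a b ∧ ¬G.Adj a c ∧ ¬G.Adj b c) ↔
    ∃ A : Set V, G.IsClique A ∧ G.IsClique Aᶜ :=
  no_odd_antiholes_no_indep_triple_iff_two_cliques_general G
end

section
/- A finite simple graph G is perfect if and only if its complement is perfect. (Weak Perfect Graph Theorem) -/
/-!
Lovász: a finite graph is perfect iff every induced subgraph `H` satisfies
`|H| ≤ ω(H) α(H)`, and this condition is symmetric under complementation, which swaps `ω` and
`α`. One direction holds because the colour classes of an `ω`-colouring are independent. For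
the other (Gasparian's argument), let `H` be a minimal graph satisfying the condition that is not
`ω`-colourable. Every independent set `S` is then avoided by some `ω`-clique, since otherwise
`ω(H - S) < ω` and colouring `S` with one new colour would give an `ω`-colouring of `H`. A
maximum independent set together with the colour classes of `ω`-colourings of `H - v` gives
`αω + 1` independent sets covering every vertex exactly `α` times. The `ω`-cliques avoiding them
meet every other set exactly once, so the incidence vectors of these sets have Gram matrix
`J - I` against those of the cliques. That matrix is nonsingular, so `αω + 1 ≤ |H|`.
-/

/-- A graph is perfect if every induced subgraph has chromatic number equal to
its clique number. -/
def IsPerfect {V : Type*} (G : SimpleGraph V) : Prop :=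
  ∀ s : Set V, (G.induce s).chromaticNumber = ((G.induce s).cliqueNum : ℕ∞)

open Finset

theorem card_le_card_of_dotProduct_eq_ite {K ι W : Type*} [Field K] [Fintype ι] [DecidableEq ι]
    [Fintype W] (x y : ι → W → K) (hxy : ∀ p q, x p ⬝ᵥ y q = if p = q then 0 else 1)
    (hι : (Fintype.card ι : K) ≠ 1) : Fintype.card ι ≤ Fintype.card W := by
  have hli : LinearIndependent K x := by
    rw [Fintype.linearIndependent_iff]
    intro g hg
    have hconst : ∀ q, g q = ∑ p, g p := by
      intro q
      have hpair := congrArg (· ⬝ᵥ y q) hg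
      simp only [sum_dotProduct, smul_dotProduct, hxy, smul_eq_mul, mul_ite, mul_zero, mul_one,
        zero_dotProduct, sum_ite, filter_ne', sum_const_zero, zero_add] at hpair
      rw [← add_sum_erase _ _ (mem_univ q), hpair, add_zero]
    have hsum : ∑ p, g p = 0 := by
      have hmul : ∑ p, g p = Fintype.card ι * ∑ p, g p := by
        conv_lhs => rw [sum_congr rfl fun p _ => hconst p]
        simp
      have : ((Fintype.card ι : K) - 1) * ∑ p, g p = 0 := by rw [sub_mul, ← hmul]; ring
      exact (mul_eq_zero.mp this).resolve_left (sub_ne_zero.mpr hι)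
    intro q
    rw [hconst q, hsum]
  simpa using hli.fintype_card_le_finrank

theorem eq_ite_of_sum_add_one_eq_card {ι : Type*} [Fintype ι] [DecidableEq ι] {f : ι → ℕ}
    {q : ι} (hle : ∀ p, f p ≤ 1) (hq : f q = 0) (hsum : ∑ p, f p + 1 = Fintype.card ι)
    (p : ι) :
    f p = if p = q then 0 else 1 := by
  split_ifs with hpq
  · rwa [hpq]
  refine (hle p).antisymm (Nat.one_le_iff_ne_zero.mpr fun hp ↦ ?_)
  have hlt : ∑ r ∈ univ.erase q, f r < ∑ r ∈ univ.erase q, 1 :=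
    sum_lt_sum (fun r _ ↦ hle r) ⟨p, mem_erase.mpr ⟨hpq, mem_univ p⟩, by omega⟩
  rw [sum_erase _ hq, sum_const, card_erase_of_mem (mem_univ q), card_univ, smul_eq_mul,
    mul_one] at hlt
  omega

namespace SimpleGraph

variable {V W : Type*} {G : SimpleGraph V} {G' : SimpleGraph W}

theorem Embedding.cliqueNum_le [Finite W] (f : G ↪g G') : G.cliqueNum ≤ G'.cliqueNum := by
  obtain ⟨s, hs⟩ := G.exists_isNClique_cliqueNum
  have hclique : G'.IsClique (s.map f.toEmbedding : Set W) := by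
    rw [coe_map]
    rintro _ ⟨a, ha, rfl⟩ _ ⟨b, hb, rfl⟩ hab
    exact f.map_adj_iff.mpr (hs.isClique ha hb (ne_of_apply_ne _ hab))
  simpa [hs.card_eq] using hclique.card_le_cliqueNum

theorem Embedding.indepNum_le [Finite W] (f : G ↪g G') : G.indepNum ≤ G'.indepNum := by
  simpa using (Embedding.complEquiv f).cliqueNum_le

theorem Iso.cliqueNum_eq [Finite V] [Finite W] (e : G ≃g G') : G.cliqueNum = G'.cliqueNum :=
  e.toEmbedding.cliqueNum_le.antisymm e.symm.toEmbedding.cliqueNum_le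

theorem Iso.indepNum_eq [Finite V] [Finite W] (e : G ≃g G') : G.indepNum = G'.indepNum :=
  e.toEmbedding.indepNum_le.antisymm e.symm.toEmbedding.indepNum_le

theorem induce_compl (s : Set V) : Gᶜ.induce s = (G.induce s)ᶜ := by
  ext a b
  simp [Subtype.ext_iff]

noncomputable def induceInduceIso (s : Set V) (t : Set s) :
    (G.induce s).induce t ≃g G.induce (Subtype.val '' t) where
  toEquiv := Equiv.Set.image Subtype.val t Subtype.val_injective
  map_rel_iff' := Iff.rfl

theorem Colorable.card_le_mul_indepNum [Fintype V] {k : ℕ} (hc : G.Colorable k) :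
    Fintype.card V ≤ k * G.indepNum := by
  classical
  obtain ⟨c⟩ := hc
  calc Fintype.card V = ∑ j : Fin k, #{v | c v = j} :=
        card_eq_sum_card_fiberwise fun v _ ↦ mem_univ (c v)
    _ ≤ ∑ _j : Fin k, G.indepNum := sum_le_sum fun j _ ↦ IsIndepSet.card_le_indepNum <| by
        simpa [Coloring.colorClass] using c.isIndepSet_colorClass j
    _ = k * G.indepNum := by simp

def LovaszCondition (G : SimpleGraph V) : Prop :=
  ∀ s : Set V, Nat.card s ≤ (G.induce s).cliqueNum * (G.induce s).indepNum

theorem lovaszCondition_compl_iff : Gᶜ.LovaszCondition ↔ G.LovaszCondition := by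
  simp only [LovaszCondition, induce_compl, cliqueNum_compl, indepNum_compl, mul_comm]

theorem LovaszCondition.card_le [Finite V] (h : G.LovaszCondition) :
    Nat.card V ≤ G.cliqueNum * G.indepNum := by
  simpa [G.induceUnivIso.cliqueNum_eq, G.induceUnivIso.indepNum_eq] using h Set.univ

theorem LovaszCondition.induce [Finite V] (h : G.LovaszCondition) (s : Set V) :
    (G.induce s).LovaszCondition := by
  intro t
  have e := G.induceInduceIso s t
  rw [Nat.card_congr e.toEquiv, e.cliqueNum_eq, e.indepNum_eq]
  exact h _

theorem Colorable.succ_of_induce_compl {S : Set V} (hS : G.IsIndepSet S) {k : ℕ}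
    (hc : (G.induce Sᶜ).Colorable k) : G.Colorable (k + 1) := by
  classical
  obtain ⟨c⟩ := hc
  refine ⟨Coloring.mk (fun v ↦ if h : v ∈ S then Fin.last k else (c ⟨v, h⟩).castSucc) ?_⟩
  intro a b hab
  by_cases ha : a ∈ S <;> by_cases hb : b ∈ S <;>
    simp only [ha, hb, dite_true, dite_false]
  · exact fun _ ↦ hS ha hb (G.ne_of_adj hab) hab
  · exact (Fin.castSucc_lt_last _).ne'
  · exact (Fin.castSucc_lt_last _).ne
  · exact fun h ↦ c.valid (v := ⟨a, ha⟩) (w := ⟨b, hb⟩) hab (Fin.castSucc_injective _ h)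

theorem cliqueNum_induce_compl_eq [Finite V] (hcol : ¬G.Colorable G.cliqueNum) {S : Set V}
    (hS : G.IsIndepSet S) (hc : (G.induce Sᶜ).Colorable (G.induce Sᶜ).cliqueNum) :
    (G.induce Sᶜ).cliqueNum = G.cliqueNum :=
  (cliqueNum_induce_le Sᶜ).antisymm <| not_lt.mp fun hlt ↦
    hcol ((hc.succ_of_induce_compl hS).mono hlt)

theorem exists_isNClique_cliqueNum_induce_compl (S : Set V) :
    ∃ C : Finset V, G.IsNClique (G.induce Sᶜ).cliqueNum C ∧ Disjoint (C : Set V) S := by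
  obtain ⟨C, hC⟩ := (G.induce Sᶜ).exists_isNClique_cliqueNum
  refine ⟨C.map (.subtype _), (isNClique_induce_iff _ _ _).mp hC, ?_⟩
  rw [Set.disjoint_left]
  rintro _ hv
  simp only [coe_map, Function.Embedding.coe_subtype, Set.mem_image] at hv
  obtain ⟨w, -, rfl⟩ := hv
  exact w.2

section Gasparian

variable [Fintype V] [DecidableEq V] {κ : Type*} [DecidableEq κ]

/-- For `S₀` a maximum independent set and `c v` an `ω`-colouring of `G - v`, these are the
`αω + 1` independent sets of Gasparian's argument. -/
def gasparianSets (S₀ : Finset V) (c : ∀ v : V, (G.induce {v}ᶜ).Coloring κ) :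
    Option (S₀ × κ) → Finset V
  | none => S₀
  | some (v, j) => {w | ∃ h : w ≠ v, c v ⟨w, h⟩ = j}

variable {S₀ : Finset V} {c : ∀ v : V, (G.induce {v}ᶜ).Coloring κ}

theorem isIndepSet_gasparianSets (hS₀ : G.IsIndepSet S₀) :
    ∀ p, G.IsIndepSet (gasparianSets S₀ c p)
  | none => hS₀
  | some (v, j) => by
    intro a ha b hb _ hab
    simp only [gasparianSets, coe_filter, mem_univ, true_and, Set.mem_ofPred_eq] at ha hb
    obtain ⟨ha, rfl⟩ := ha
    obtain ⟨hb, hj⟩ := hb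
    exact (c v).valid (v := ⟨a, ha⟩) (w := ⟨b, hb⟩) hab hj.symm

theorem card_filter_mem_gasparianSets [Fintype κ] (x : V) :
    #{p | x ∈ gasparianSets S₀ c p} = #S₀ := by
  have hfiber : ∀ v : S₀, ∑ j, (if x ∈ gasparianSets S₀ c (some (v, j)) then 1 else 0) =
      if x = v then 0 else 1 := by
    intro v
    by_cases hx : x = v <;> simp [gasparianSets, hx]
  rw [card_filter, Fintype.sum_option, Fintype.sum_prod_type]
  simp only [hfiber, gasparianSets.eq_1]
  rw [sum_coe_sort S₀ fun v ↦ if x = v then 0 else 1, ← sum_ite_eq S₀ x fun _ ↦ 1,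
    ← sum_add_distrib, card_eq_sum_ones]
  exact sum_congr rfl fun v _ ↦ by split_ifs <;> rfl

-- `C` has `#κ` vertices, each lying in exactly `#S₀` of the `#S₀ * #κ + 1` sets. It meets each
-- of them at most once and misses the `q`-th, so it meets every other one exactly once.
theorem card_inter_gasparianSets_eq_ite [Fintype κ] (hS₀ : G.IsIndepSet S₀) {C : Finset V}
    (hC : G.IsNClique (Fintype.card κ) C) {q : Option (S₀ × κ)}
    (hCq : Disjoint C (gasparianSets S₀ c q)) (p : Option (S₀ × κ)) :
    #(C ∩ gasparianSets S₀ c p) = if p = q then 0 else 1 := by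
  refine eq_ite_of_sum_add_one_eq_card (f := fun p ↦ #(C ∩ gasparianSets S₀ c p))
    (fun p ↦ ?_) (card_eq_zero.mpr (disjoint_iff_inter_eq_empty.mp hCq)) ?_ p
  · refine card_le_one.mpr fun a ha b hb ↦ by_contra fun hab ↦ ?_
    rw [mem_inter] at ha hb
    exact isIndepSet_gasparianSets hS₀ p ha.2 hb.2 hab (hC.isClique ha.1 hb.1 hab)
  · calc ∑ p, #(C ∩ gasparianSets S₀ c p) + 1
          = ∑ x ∈ C, #{p | x ∈ gasparianSets S₀ c p} + 1 := by
          simp_rw [← filter_mem_eq_inter, card_eq_sum_ones, sum_filter]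
          rw [sum_comm]
      _ = _ := by simp [card_filter_mem_gasparianSets, hC.card_eq, mul_comm]

end Gasparian

theorem cliqueNum_mul_indepNum_lt_card [Fintype V] [Nonempty V]
    (hcol : ∀ v, (G.induce {v}ᶜ).Colorable G.cliqueNum)
    (hclique : ∀ S : Set V, G.IsIndepSet S →
      ∃ C : Finset V, G.IsNClique G.cliqueNum C ∧ Disjoint (C : Set V) S) :
    G.cliqueNum * G.indepNum < Fintype.card V := by
  classical
  rcases Nat.eq_zero_or_pos (G.cliqueNum * G.indepNum) with h0 | hpos
  · exact h0 ▸ Fintype.card_pos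
  obtain ⟨S₀, hS₀⟩ := G.exists_isNIndepSet_indepNum
  let c : ∀ v, (G.induce {v}ᶜ).Coloring (Fin G.cliqueNum) := fun v ↦ (hcol v).some
  set T := gasparianSets S₀ c
  have hcard :
      Fintype.card (Option (S₀ × Fin G.cliqueNum)) = G.cliqueNum * G.indepNum + 1 := by
    simp [hS₀.card_eq, mul_comm]
  choose C hC hCT using fun p ↦ hclique (T p) (isIndepSet_gasparianSets hS₀.isIndepSet p)
  have hdot : ∀ p q, (fun v ↦ if v ∈ T p then (1 : ℚ) else 0) ⬝ᵥ
      (fun v ↦ if v ∈ C q then 1 else 0) = if p = q then 0 else 1 := by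
    intro p q
    have hinter : ({v | v ∈ C q ∧ v ∈ T p} : Finset V) = C q ∩ T p := by ext; simp
    simp only [dotProduct, ← ite_and, mul_ite, mul_one, mul_zero]
    rw [sum_boole, hinter, card_inter_gasparianSets_eq_ite hS₀.isIndepSet (by simpa using hC q)
      (disjoint_coe.mp (hCT q))]
    split_ifs <;> simp
  have hι : (Fintype.card (Option (S₀ × Fin G.cliqueNum)) : ℚ) ≠ 1 := by
    rw [hcard, Nat.cast_ne_one]
    omega
  have := card_le_card_of_dotProduct_eq_ite _ _ hdot hι
  omega

theorem cliqueNum_mul_indepNum_lt_card_of_not_colorable [Finite V]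
    (hcol : ¬G.Colorable G.cliqueNum)
    (hmin : ∀ S : Set V, S.Nonempty → (G.induce Sᶜ).Colorable (G.induce Sᶜ).cliqueNum) :
    G.cliqueNum * G.indepNum < Nat.card V := by
  classical
  cases nonempty_fintype V
  have : Nonempty V := not_isEmpty_iff.mp fun _ ↦ hcol (Colorable.of_isEmpty _)
  have hω : ∀ S, G.IsIndepSet S → S.Nonempty → (G.induce Sᶜ).cliqueNum = G.cliqueNum :=
    fun S hS hne ↦ cliqueNum_induce_compl_eq hcol hS (hmin S hne)
  rw [Nat.card_eq_fintype_card]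
  refine cliqueNum_mul_indepNum_lt_card (fun v ↦ ?_) (fun S hS ↦ ?_)
  · rw [← hω {v} (Set.pairwise_singleton _ _) (Set.singleton_nonempty v)]
    exact hmin _ (Set.singleton_nonempty v)
  · rcases S.eq_empty_or_nonempty with rfl | hne
    · obtain ⟨C, hC⟩ := G.exists_isNClique_cliqueNum
      exact ⟨C, hC, Set.disjoint_empty _⟩
    · rw [← hω S hS hne]
      exact exists_isNClique_cliqueNum_induce_compl S

theorem LovaszCondition.colorable_cliqueNum [Finite V] (h : G.LovaszCondition) :
    G.Colorable G.cliqueNum := by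
  induction hn : Nat.card V using Nat.strong_induction_on generalizing V with
  | _ n ih =>
  by_contra hcol
  refine (cliqueNum_mul_indepNum_lt_card_of_not_colorable hcol fun S ⟨v, hv⟩ ↦ ?_).not_ge
    h.card_le
  exact ih _ (hn ▸ Finite.card_subtype_lt (x := v) (not_not.mpr hv)) (h.induce Sᶜ) rfl

theorem isPerfect_iff_lovaszCondition [Finite V] : IsPerfect G ↔ G.LovaszCondition := by
  refine ⟨fun hG s ↦ ?_, fun hG s ↦ ?_⟩
  · have := Fintype.ofFinite s
    rw [Nat.card_eq_fintype_card]
    refine Colorable.card_le_mul_indepNum ?_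
    simpa [hG s] using (G.induce s).colorable_chromaticNumber_of_fintype
  · exact le_antisymm (hG.induce s).colorable_cliqueNum.chromaticNumber_le
      cliqueNum_le_chromaticNumber

end SimpleGraph

/-- Weak Perfect Graph Theorem: a finite simple graph is perfect iff its complement is. -/
theorem isPerfect_iff_isPerfect_compl {V : Type*} [Fintype V] (G : SimpleGraph V) :
    IsPerfect G ↔ IsPerfect Gᶜ := by
  rw [SimpleGraph.isPerfect_iff_lovaszCondition, SimpleGraph.isPerfect_iff_lovaszCondition,
    SimpleGraph.lovaszCondition_compl_iff]
end

section
/- (Chvátal–Hammer) A finite simple graph G is a threshold graph (has no induced P_4, C_4, or 2K_2) if and only if there exists an ordering v_1, ..., v_n of its vertices such that each v_i is either isolated or dominating in the subgraph induced by {v_1, ..., v_i}. -/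
/-- A graph is threshold if it has no induced `P₄`, `C₄`, or `C₄`-complement (`2K₂`). -/
def IsThreshold {V : Type*} (G : SimpleGraph V) : Prop :=
  IsEmpty (SimpleGraph.pathGraph 4 ↪g G) ∧ IsEmpty (SimpleGraph.cycleGraph 4 ↪g G) ∧
    IsEmpty ((SimpleGraph.cycleGraph 4)ᶜ ↪g G)

open SimpleGraph
universe u

def emb4 {V : Type*} {G : SimpleGraph V} {H : SimpleGraph (Fin 4)} (w : Fin 4 → V)
    (hinj : Function.Injective w)
    (hadj : ∀ i j, H.Adj i j ↔ G.Adj (w i) (w j)) : H ↪g G :=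
  ⟨⟨w, hinj⟩, fun {i j} => (hadj i j).symm⟩

lemma inj4 {V : Type*} {a b c d : V} (h1 : a ≠ b) (h2 : a ≠ c) (h3 : a ≠ d)
    (h4 : b ≠ c) (h5 : b ≠ d) (h6 : c ≠ d) : Function.Injective ![a,b,c,d] := by
  intro i j hij
  fin_cases i <;> fin_cases j <;> simp_all

lemma total_comp {V : Type*} {G : SimpleGraph V} (hT : IsThreshold G) (u v : V) :
    (∀ x, G.Adj u x → x ≠ v → G.Adj v x) ∨ (∀ x, G.Adj v x → x ≠ u → G.Adj u x) := by
  by_contra hc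
  push_neg at hc
  obtain ⟨⟨a, hua, hav, hva⟩, ⟨b, hvb, hbu, hub⟩⟩ := hc
  have huv : u ≠ v := by rintro rfl; exact hva hua
  have hau : a ≠ u := fun h => G.irrefl (h ▸ hua)
  have hbv : b ≠ v := fun h => G.irrefl (h ▸ hvb)
  have hab : a ≠ b := fun h => hub (h ▸ hua)
  have hva' : ¬G.Adj a v := fun h => hva h.symm
  have hub' : ¬G.Adj b u := fun h => hub h.symm
  by_cases h1 : G.Adj u v <;> by_cases h2 : G.Adj a b
  · -- C4 : a-u-v-b-a
    refine hT.2.1.false (emb4 ![a,u,v,b]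
      (inj4 hau hav hab huv hbu.symm hbv.symm) ?_)
    intro i j
    fin_cases i <;> fin_cases j <;>
      simp (config := { decide := true }) [cycleGraph_adj, hua, hua.symm, h1, h1.symm,
        hvb, hvb.symm, h2, h2.symm, hva, hva', hub, hub', G.irrefl]
  · -- P4 : a-u-v-b
    have hba' : ¬G.Adj b a := fun h => h2 h.symm
    refine hT.1.false (emb4 ![a,u,v,b]
      (inj4 hau hav hab huv hbu.symm hbv.symm) ?_)
    intro i j
    fin_cases i <;> fin_cases j <;>
      simp (config := { decide := true }) [pathGraph_adj, hua, hua.symm, h1, h1.symm,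
        hvb, hvb.symm, h2, hba', hva, hva', hub, hub', G.irrefl]
  · -- P4 : u-a-b-v
    have hvu' : ¬G.Adj v u := fun h => h1 h.symm
    refine hT.1.false (emb4 ![u,a,b,v]
      (inj4 hau.symm hbu.symm huv hab hav hbv) ?_)
    intro i j
    fin_cases i <;> fin_cases j <;>
      simp (config := { decide := true }) [pathGraph_adj, hua, hua.symm, h2, h2.symm,
        hvb, hvb.symm, h1, hvu', hva, hva', hub, hub', G.irrefl]
  · -- 2K2 : edges u-a and v-b ; map ![u,v,a,b]
    have hvu' : ¬G.Adj v u := fun h => h1 h.symm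
    have hba' : ¬G.Adj b a := fun h => h2 h.symm
    refine hT.2.2.false (emb4 ![u,v,a,b]
      (inj4 huv hau.symm hbu.symm hav.symm hbv.symm hab) ?_)
    intro i j
    fin_cases i <;> fin_cases j <;>
      simp (config := { decide := true }) [compl_adj, cycleGraph_adj, hua, hua.symm,
        h1, hvu', hvb, hvb.symm, h2,
        hba', hva, hva', hub, hub', G.irrefl,
        huv, hau, hbv, hab, hau.symm, hbu, hbu.symm, hav, hav.symm, hbv.symm, hab.symm, huv.symm]


lemma isThreshold_comap {V W : Type*} (G : SimpleGraph W) (f : V ↪ W) (hT : IsThreshold G) :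
    IsThreshold (G.comap f) :=
  ⟨⟨fun e => hT.1.false ((SimpleGraph.Embedding.comap f G).comp e)⟩,
   ⟨fun e => hT.2.1.false ((SimpleGraph.Embedding.comap f G).comp e)⟩,
   ⟨fun e => hT.2.2.false ((SimpleGraph.Embedding.comap f G).comp e)⟩⟩

open Finset in
lemma exists_iso_or_dom {V : Type*} [Fintype V] [Nonempty V] {G : SimpleGraph V}
    (hT : IsThreshold G) :
    ∃ x : V, (∀ y, ¬G.Adj x y) ∨ (∀ y, y ≠ x → G.Adj x y) := by
  classical
  obtain ⟨u, -, hu⟩ := Finset.exists_max_image Finset.univ (fun x => G.degree x)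
    ⟨Classical.arbitrary V, Finset.mem_univ _⟩
  by_cases hdom : ∀ w, w ≠ u → G.Adj u w
  · exact ⟨u, Or.inr hdom⟩
  push_neg at hdom
  obtain ⟨w, hwu, huw⟩ := hdom
  refine ⟨w, Or.inl fun z hwz => ?_⟩
  have hzu : z ≠ u := fun h => huw (h ▸ hwz).symm
  -- Step 1 : G.Adj u z
  have huz : G.Adj u z := by
    rcases total_comp hT u w with h | h
    · -- N(u) ⊆ N(w), so by maximality N(u) = N(w)
      have hsub : G.neighborFinset u ⊆ G.neighborFinset w := by
        intro x hx
        rw [mem_neighborFinset] at hx ⊢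
        exact h x hx (fun hxw => huw (hxw ▸ hx))
      have heq : G.neighborFinset u = G.neighborFinset w :=
        Finset.eq_of_subset_of_card_le hsub (hu w (Finset.mem_univ w))
      have : z ∈ G.neighborFinset u := by
        rw [heq, mem_neighborFinset]; exact hwz
      rwa [mem_neighborFinset] at this
    · exact h z hwz hzu
  -- Step 2 : compare u and z
  rcases total_comp hT z u with h | h
  · exact huw (h w hwz.symm hwu)
  · -- deg z ≥ deg u + 1
    have hsub : insert u (insert w ((G.neighborFinset u).erase z)) ⊆ G.neighborFinset z := by
      intro x hx
      simp only [Finset.mem_insert, Finset.mem_erase] at hx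
      rw [mem_neighborFinset]
      rcases hx with rfl | rfl | ⟨hxz, hx⟩
      · exact huz.symm
      · exact hwz.symm
      · rw [mem_neighborFinset] at hx
        exact h x hx hxz
    have hcard : G.degree u + 1 ≤ G.degree z := by
      have h1 : w ∉ (G.neighborFinset u).erase z := by
        simp [mem_neighborFinset, huw]
      have h2 : u ∉ insert w ((G.neighborFinset u).erase z) := by
        simp only [Finset.mem_insert, Finset.mem_erase, mem_neighborFinset]
        push_neg
        exact ⟨hwu.symm, fun _ => G.irrefl⟩
      have h3 : z ∈ G.neighborFinset u := by rw [mem_neighborFinset]; exact huz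
      have := Finset.card_le_card hsub
      rw [Finset.card_insert_of_notMem h2, Finset.card_insert_of_notMem h1,
        Finset.card_erase_of_mem h3] at this
      have hd : 1 ≤ G.degree u := by
        rw [← card_neighborFinset_eq_degree]
        exact Finset.card_pos.2 ⟨z, h3⟩
      unfold SimpleGraph.degree
      omega
    have := hu z (Finset.mem_univ z)
    omega


lemma forward : ∀ (n : ℕ) (V : Type u) [Fintype V], Fintype.card V = n →
    ∀ G : SimpleGraph V, IsThreshold G →
    ∃ v : Fin (Fintype.card V) ≃ V,
      ∀ i, (∀ j, j < i → ¬G.Adj (v j) (v i)) ∨ (∀ j, j < i → G.Adj (v j) (v i)) := by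
  intro n
  induction n using Nat.strong_induction_on with
  | _ n ih =>
    intro V _ hn G hT
    classical
    rcases isEmpty_or_nonempty V with hV | hV
    · haveI : IsEmpty (Fin (Fintype.card V)) := by
        rw [Fintype.card_eq_zero]; infer_instance
      exact ⟨Equiv.equivOfIsEmpty _ _, fun i => (this.false i).elim⟩
    subst hn
    set n := Fintype.card V with hnn
    have hn1 : 1 ≤ n := Fintype.card_pos
    obtain ⟨x, hx⟩ := exists_iso_or_dom hT
    -- the vertex set minus x
    let V' := {y : V // y ≠ x}
    let f : V' ↪ V := Function.Embedding.subtype _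
    let G' : SimpleGraph V' := G.comap f
    have hT' : IsThreshold G' := isThreshold_comap G f hT
    have hc : Fintype.card V' = n - 1 := by
      simp only [V', hnn]
      rw [Fintype.card_subtype_compl, Fintype.card_subtype_eq]
    obtain ⟨e0, he0⟩ := ih (n - 1) (by omega) V' hc G' hT'
    let E : Fin (n - 1) ≃ V' := (finCongr hc.symm).trans e0
    have hE : ∀ i' : Fin (n-1), (∀ j', j' < i' → ¬G'.Adj (E j') (E i')) ∨
        (∀ j', j' < i' → G'.Adj (E j') (E i')) := by
      intro i'
      rcases he0 (finCongr hc.symm i') with h | h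
      · exact Or.inl fun j' hj' => h (finCongr hc.symm j') hj'
      · exact Or.inr fun j' hj' => h (finCongr hc.symm j') hj'
    let g : Fin n → V := fun i => if h : (i : ℕ) < n - 1 then (E ⟨i, h⟩).1 else x
    have hglt : ∀ (i : Fin n) (h : (i:ℕ) < n - 1), g i = (E ⟨i, h⟩).1 := fun i h => dif_pos h
    have hgx : ∀ (i : Fin n), ¬((i:ℕ) < n - 1) → g i = x := fun i h => dif_neg h
    have hbij : Function.Bijective g := by
      constructor
      · intro i j hij
        by_cases hi : (i:ℕ) < n - 1 <;> by_cases hj : (j:ℕ) < n - 1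
        · rw [hglt i hi, hglt j hj] at hij
          have := E.injective (Subtype.ext hij)
          exact Fin.ext (congrArg Fin.val this : _)
        · rw [hglt i hi, hgx j hj] at hij; exact absurd hij (E _).2
        · rw [hgx i hi, hglt j hj] at hij; exact absurd hij.symm (E _).2
        · exact Fin.ext (by omega)
      · intro y
        by_cases hy : y = x
        · exact ⟨⟨n-1, by omega⟩, by rw [hgx _ (by simp)]; exact hy.symm⟩
        · refine ⟨⟨(E.symm ⟨y, hy⟩ : Fin (n-1)), by omega⟩, ?_⟩
          rw [hglt _ (by simp)]
          have : (⟨(E.symm ⟨y, hy⟩ : Fin (n-1)), by simp⟩ : Fin (n-1)) = E.symm ⟨y, hy⟩ :=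
            Fin.ext rfl
          rw [this, E.apply_symm_apply]
    refine ⟨Equiv.ofBijective g hbij, ?_⟩
    intro i
    simp only [Equiv.ofBijective_apply]
    by_cases hi : (i:ℕ) < n - 1
    · rcases hE ⟨i, hi⟩ with h | h
      · refine Or.inl fun j hj hadj => ?_
        have hj' : (j:ℕ) < n - 1 := by omega
        rw [hglt j hj', hglt i hi] at hadj
        exact h ⟨j, hj'⟩ hj hadj
      · refine Or.inr fun j hj => ?_
        have hj' : (j:ℕ) < n - 1 := by omega
        rw [hglt j hj', hglt i hi]
        exact h ⟨j, hj'⟩ hj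
    · rcases hx with hiso | hdom
      · refine Or.inl fun j hj hadj => ?_
        rw [hgx i hi] at hadj
        exact hiso _ hadj.symm
      · refine Or.inr fun j hj => ?_
        have hj' : (j:ℕ) < n - 1 := by omega
        rw [hgx i hi, hglt j hj']
        exact (hdom _ (E _).2).symm


lemma no_embed {V : Type*} [Fintype V] {G : SimpleGraph V} {H : SimpleGraph (Fin 4)}
    (hH : ∀ k : Fin 4, (∃ k', H.Adj k' k) ∧ ∃ k', k' ≠ k ∧ ¬H.Adj k' k)
    (v : Fin (Fintype.card V) ≃ V)
    (hv : ∀ i, (∀ j, j < i → ¬G.Adj (v j) (v i)) ∨ (∀ j, j < i → G.Adj (v j) (v i))) :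
    IsEmpty (H ↪g G) := by
  constructor
  intro e
  obtain ⟨k0, -, hk0⟩ := Finset.exists_max_image Finset.univ (fun k : Fin 4 => v.symm (e k))
    ⟨0, Finset.mem_univ _⟩
  have hlt : ∀ k, k ≠ k0 → v.symm (e k) < v.symm (e k0) := by
    intro k hk
    refine lt_of_le_of_ne (hk0 k (Finset.mem_univ _)) fun h => hk (e.injective (v.symm.injective h))
  obtain ⟨⟨k1, hk1⟩, ⟨k2, hk2ne, hk2⟩⟩ := hH k0
  have hk1ne : k1 ≠ k0 := fun h => H.irrefl (h ▸ hk1)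
  rcases hv (v.symm (e k0)) with h | h
  · refine h (v.symm (e k1)) (hlt k1 hk1ne) ?_
    rw [Equiv.apply_symm_apply, Equiv.apply_symm_apply]
    exact e.map_rel_iff.2 hk1
  · refine hk2 (e.map_rel_iff.1 ?_)
    have := h (v.symm (e k2)) (hlt k2 hk2ne)
    rwa [Equiv.apply_symm_apply, Equiv.apply_symm_apply] at this

/-- Chvátal–Hammer: a finite simple graph is threshold iff there is a vertex ordering
in which each vertex is isolated or dominating in the subgraph induced by it and its
predecessors. -/
theorem isThreshold_iff_exists_ordering {V : Type*} [Fintype V] (G : SimpleGraph V) :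
    IsThreshold G ↔ ∃ v : Fin (Fintype.card V) ≃ V,
      ∀ i, (∀ j, j < i → ¬G.Adj (v j) (v i)) ∨ (∀ j, j < i → G.Adj (v j) (v i)) := by
  constructor
  · intro hT
    exact forward (Fintype.card V) V rfl G hT
  · rintro ⟨v, hv⟩
    refine ⟨no_embed ?_ v hv, no_embed ?_ v hv, no_embed ?_ v hv⟩
    · simp only [pathGraph_adj]; decide
    · decide
    · decide
end

section
/- For every l ≥ 5, the cycle C_l is not a mock threshold graph: there is no vertex ordering v_1, ..., v_l of C_l such that for each i, the degree of v_i in the subgraph induced by {v_1, ..., v_i} is at most 1 or at least i - 2. -/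
/-- `G` is mock threshold if there is a vertex ordering `v 0, v 1, …` such that each
vertex `v i` has, among its predecessors, degree at most 1 or at least `(i+1) - 2`. -/
def IsMockThreshold {V : Type*} [Fintype V] (G : SimpleGraph V) : Prop :=
  ∃ v : Fin (Fintype.card V) ≃ V, ∀ i,
    {j | j < i ∧ G.Adj (v j) (v i)}.ncard ≤ 1 ∨
    (i : ℕ) + 1 - 2 ≤ {j | j < i ∧ G.Adj (v j) (v i)}.ncard

/-- For every `l ≥ 5`, the cycle `C_l` is not mock threshold. -/
theorem cycle_not_isMockThreshold (l : ℕ) (hl : 5 ≤ l) :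
    ¬IsMockThreshold (SimpleGraph.cycleGraph l) := by
  obtain ⟨m, rfl⟩ : ∃ m, l = m + 3 := ⟨l - 3, by omega⟩
  rintro ⟨v, h⟩
  have hcard : Fintype.card (Fin (m + 3)) = m + 3 := Fintype.card_fin _
  set i : Fin (Fintype.card (Fin (m + 3))) := ⟨m + 2, by omega⟩ with hi
  have hset : {j | j < i ∧ (SimpleGraph.cycleGraph (m + 3)).Adj (v j) (v i)}
      = v ⁻¹' ((SimpleGraph.cycleGraph (m + 3)).neighborSet (v i)) := by
    ext j
    simp only [Set.mem_setOf_eq, Set.mem_preimage, SimpleGraph.mem_neighborSet]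
    constructor
    · exact fun hj => hj.2.symm
    · intro hj
      refine ⟨?_, hj.symm⟩
      have hne : j ≠ i := by
        rintro rfl
        exact (SimpleGraph.cycleGraph (m + 3)).irrefl hj
      have hj2 : (j : ℕ) < m + 3 := by omega
      have : (j : ℕ) ≠ m + 2 := fun he => hne (Fin.ext (by simp [hi, he]))
      exact Fin.lt_def.mpr (by simp only [hi]; omega)
  have hcard2 : {j | j < i ∧ (SimpleGraph.cycleGraph (m + 3)).Adj (v j) (v i)}.ncard = 2 := by
    rw [hset]
    have : v ⁻¹' ((SimpleGraph.cycleGraph (m + 3)).neighborSet (v i))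
        = v.symm '' ((SimpleGraph.cycleGraph (m + 3)).neighborSet (v i)) := by
      rw [Equiv.image_eq_preimage_symm]
      simp
    rw [this, Set.ncard_image_of_injective _ v.symm.injective]
    have hd := SimpleGraph.cycleGraph_degree_three_le (v := v i)
    rw [SimpleGraph.degree, SimpleGraph.neighborFinset_def] at hd
    rw [Set.ncard_eq_toFinset_card']
    exact hd
  rcases h i with h1 | h1 <;> rw [hcard2] at h1
  · omega
  · simp only [hi] at h1
    omega
end
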